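/- If a multivariate polynomial Z(y_1,...,y_m) is stable and e is an index, then both the partial derivative Z_e = ∂Z/∂y_e and the restriction Z^e = Z|_{y_e=0} are stable (or identically zero). -/

import Mathlib

open MvPolynomial

/-- The deletion `Z^e`: the polynomial `Z` with `y_e` set to `0`. -/
noncomputable def del {m : ℕ} (e : Fin m) (Z : MvPolynomial (Fin m) ℝ) : MvPolynomial (Fin m) ℝ :=
  aeval (fun i => if i = e then (0 : MvPolynomial (Fin m) ℝ) else X i) Z

/-- Multiaffine: every variable occurs to at most the first power. -/
def Multiaffine {m : ℕ} (Z : MvPolynomial (Fin m) ℝ) : Prop :=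
  ∀ e : Fin m, Z.degreeOf e ≤ 1


/-- A real polynomial is stable if it does not vanish when all variables lie in the
open upper half-plane. -/
def Stable {m : ℕ} (Z : MvPolynomial (Fin m) ℝ) : Prop :=
  ∀ y : Fin m → ℂ, (∀ e, 0 < (y e).im) →
    eval y (MvPolynomial.map (algebraMap ℝ ℂ) Z) ≠ 0

/-!
Write `Z(z) = ∑ₖ cₖ(z) z_eᵏ` with coefficients `cₖ` not involving `z_e`. As `s → 0`, the
polynomial `Z(…, z_e := s)` tends locally uniformly to `c₀`, which is `Z^e`, and
`sᵈ Z(…, z_e := 1/s)` tends to the leading coefficient `c_d`. For `s` in the upper (respectively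
lower) half-plane these approximants have no zeros on the upper half-space, so by Hurwitz's
theorem (proved along a complex line through the minimum modulus principle) neither has its
nonzero limit. Finally, at a point `z` of the upper half-space, `t ↦ Z(…, z_e := t)` has degree
`d` since `c_d(z) ≠ 0`, and all its roots lie in the closed lower half-plane, so by Gauss–Lucas
so do the roots of its derivative, which at `t = z_e` is `∂Z/∂z_e (z)`.
-/

open Filter Metric Set Topology

theorem Complex.le_norm_of_forall_mem_frontier_le_norm {E : Type*} [NormedAddCommGroup E]
    [NormedSpace ℂ E] [Nontrivial E] {g : E → ℂ} {U : Set E} (hU : Bornology.IsBounded U)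
    (hg : DiffContOnCl ℂ g U) (hg0 : ∀ z ∈ closure U, g z ≠ 0) {C : ℝ}
    (hC : ∀ z ∈ frontier U, C ≤ ‖g z‖) {z : E} (hz : z ∈ closure U) : C ≤ ‖g z‖ := by
  rcases le_or_gt C 0 with hC0 | hC0
  · exact hC0.trans (norm_nonneg _)
  have hinv : ‖(g z)⁻¹‖ ≤ C⁻¹ :=
    Complex.norm_le_of_forall_mem_frontier_norm_le hU (hg.inv hg0)
      (fun w hw => by
        rw [Pi.inv_apply, norm_inv]
        exact inv_anti₀ hC0 (hC w hw)) hz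
  rw [norm_inv] at hinv
  exact (inv_le_inv₀ (norm_pos_iff.2 (hg0 z hz)) hC0).1 hinv

theorem Complex.ne_zero_of_tendstoUniformlyOn_closedBall {ι : Type*} {l : Filter ι} [l.NeBot]
    {F : ι → ℂ → ℂ} {f : ℂ → ℂ} {c : ℂ} {r : ℝ} (hr : 0 < r)
    (hF : ∀ᶠ i in l, DiffContOnCl ℂ (F i) (ball c r) ∧ ∀ u ∈ closedBall c r, F i u ≠ 0)
    (hFf : TendstoUniformlyOn F f l (closedBall c r)) (hf : ContinuousOn f (sphere c r))
    (hf0 : ∀ u ∈ sphere c r, f u ≠ 0) : f c ≠ 0 := by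
  obtain ⟨u₀, hu₀, hmin⟩ := (isCompact_sphere c r).exists_isMinOn
    (NormedSpace.sphere_nonempty.2 hr.le) hf.norm
  set δ := ‖f u₀‖
  have hδ : 0 < δ := norm_pos_iff.2 (hf0 u₀ hu₀)
  obtain ⟨i, ⟨hdiff, hne⟩, hclose⟩ :=
    (hF.and (Metric.tendstoUniformlyOn_iff.1 hFf (δ / 2) (half_pos hδ))).exists
  have hsphere : ∀ u ∈ sphere c r, δ / 2 ≤ ‖F i u‖ := fun u hu => by
    have h1 : δ ≤ ‖f u‖ := hmin hu
    have h2 := hclose u (sphere_subset_closedBall hu)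
    rw [dist_eq_norm] at h2
    linarith [norm_sub_norm_le (f u) (F i u)]
  have hcenter : δ / 2 ≤ ‖F i c‖ := by
    refine Complex.le_norm_of_forall_mem_frontier_le_norm isBounded_ball hdiff ?_ ?_ ?_
    · rwa [closure_ball c hr.ne']
    · rwa [frontier_ball c hr.ne']
    · rw [closure_ball c hr.ne']
      exact mem_closedBall_self hr.le
  intro hfc
  have := hclose c (mem_closedBall_self hr.le)
  rw [hfc, dist_zero_left] at this
  linarith

theorem ne_zero_of_tendstoLocallyUniformlyOn {E ι : Type*} [NormedAddCommGroup E]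
    [NormedSpace ℂ E] {l : Filter ι} [l.NeBot] {F : ι → E → ℂ} {g : E → ℂ} {U : Set E}
    (hU : IsOpen U) (hF : ∀ᶠ i in l, DifferentiableOn ℂ (F i) U ∧ ∀ z ∈ U, F i z ≠ 0)
    (hFg : TendstoLocallyUniformlyOn F g l U) (hg : AnalyticOnNhd ℂ g univ) (hg0 : g ≠ 0)
    {y : E} (hy : y ∈ U) : g y ≠ 0 := by
  intro hgy
  obtain ⟨z, hz⟩ := Function.ne_iff.1 hg0
  set line : ℂ → E := fun u => y + u • (z - y)
  have hline : AnalyticOnNhd ℂ line univ := fun u _ => by fun_prop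
  have hgline : AnalyticOnNhd ℂ (g ∘ line) univ := hg.comp hline (mapsTo_univ _ _)
  have hzeros : ∀ᶠ u in 𝓝[≠] 0, g (line u) ≠ 0 := by
    refine ((hgline 0 trivial).eventually_eq_zero_or_eventually_ne_zero).resolve_left fun h => ?_
    apply hz
    simpa [line] using hgline.eqOn_zero_of_preconnected_of_eventuallyEq_zero isPreconnected_univ
      (mem_univ 0) h (mem_univ 1)
  have hU' : ∀ᶠ u in 𝓝 0, line u ∈ U :=
    (hline 0 trivial).continuousAt.preimage_mem_nhds (by simpa [line] using hU.mem_nhds hy)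
  obtain ⟨ε, hε, hball⟩ := Metric.eventually_nhds_iff_ball.1
    (hU'.and (eventually_nhdsWithin_iff.1 hzeros))
  have hr : 0 < ε / 2 := half_pos hε
  have hsub : closedBall (0 : ℂ) (ε / 2) ⊆ ball 0 ε := closedBall_subset_ball (half_lt_self hε)
  have hmaps : MapsTo line (closedBall 0 (ε / 2)) U := fun u hu => (hball u (hsub hu)).1
  refine Complex.ne_zero_of_tendstoUniformlyOn_closedBall (l := l) (F := fun i => F i ∘ line)
    (f := g ∘ line) (c := 0) hr ?_ ?_
    (hgline.continuousOn.mono (subset_univ _)) ?_ (by simpa [line] using hgy)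
  · filter_upwards [hF] with i ⟨hdiff, hne⟩
    refine ⟨DifferentiableOn.diffContOnCl ?_, fun u hu => hne _ (hmaps hu)⟩
    rw [closure_ball 0 hr.ne']
    exact hdiff.comp (fun u _ => (hline u trivial).differentiableAt.differentiableWithinAt) hmaps
  · exact (tendstoLocallyUniformlyOn_iff_tendstoUniformlyOn_of_compact
      (isCompact_closedBall 0 _)).1 (hFg.comp line hmaps (hline.continuousOn.mono (subset_univ _)))
  · intro u hu
    refine (hball u (hsub (sphere_subset_closedBall hu))).2 ?_
    rintro rfl
    simp [hr.ne] at hu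

theorem Continuous.tendstoLocallyUniformly_curry {α β γ : Type*} [TopologicalSpace α]
    [TopologicalSpace β] [WeaklyLocallyCompactSpace β] [UniformSpace γ] {F : α → β → γ}
    (hF : Continuous (Function.uncurry F)) (a : α) : TendstoLocallyUniformly F (F a) (𝓝 a) :=
  ContinuousMap.tendsto_iff_tendstoLocallyUniformly.1
    ((ContinuousMap.curry ⟨_, hF⟩).continuous.tendsto a)

theorem MvPolynomial.exists_eval_ne_zero {R σ : Type*} [CommRing R] [IsDomain R] [Infinite R]
    {p : MvPolynomial σ R} (hp : p ≠ 0) : ∃ z, eval z p ≠ 0 := by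
  contrapose! hp
  exact MvPolynomial.funext fun z => by simp [hp z]

theorem eval_coeff_zero_ne_zero_of_frequently {σ : Type*} [Fintype σ]
    {U : Set (σ → ℂ)} (hU : IsOpen U) {R : Polynomial (MvPolynomial σ ℂ)} (h0 : R.coeff 0 ≠ 0)
    (hR : ∃ᶠ s in 𝓝 0, ∀ z ∈ U, R.eval₂ (eval z) s ≠ 0) {z : σ → ℂ} (hz : z ∈ U) :
    eval z (R.coeff 0) ≠ 0 := by
  have := frequently_iff_neBot.1 hR
  set F : ℂ → (σ → ℂ) → ℂ := fun s z => R.eval₂ (eval z) s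
  have hF (s : ℂ) : F s = fun z => ∑ k ∈ Finset.range (R.natDegree + 1),
      eval z (R.coeff k) * s ^ k :=
    funext fun z => Polynomial.eval₂_eq_sum_range _ _
  have hF0 : F 0 = fun z => eval z (R.coeff 0) := funext fun z => Polynomial.eval₂_at_zero _
  have hdiff (p : MvPolynomial σ ℂ) : Differentiable ℂ fun z => eval z p :=
    fun z => (AnalyticOnNhd.eval_mvPolynomial p z trivial).differentiableAt
  have hcont : Continuous (Function.uncurry F) := by
    simp only [Function.uncurry_def, hF]
    exact continuous_finsetSum _ fun k _ =>
      ((continuous_eval _).comp continuous_snd).mul (continuous_fst.pow k)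
  have hlim := hcont.tendstoLocallyUniformly_curry 0
  rw [hF0] at hlim
  refine ne_zero_of_tendstoLocallyUniformlyOn (l := 𝓝 0 ⊓ 𝓟 {s | ∀ z ∈ U, F s z ≠ 0}) (F := F)
    hU ?_
    (TendstoLocallyUniformly.tendstoLocallyUniformlyOn fun u hu x => ?_)
    (AnalyticOnNhd.eval_mvPolynomial _) (fun h => ?_) hz
  · filter_upwards [mem_inf_of_right (mem_principal_self _)] with s hs
    refine ⟨Differentiable.differentiableOn ?_, hs⟩
    rw [hF]
    fun_prop
  · obtain ⟨t, ht, h⟩ := hlim u hu x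
    exact ⟨t, ht, h.filter_mono inf_le_left⟩
  · obtain ⟨w, hw⟩ := exists_eval_ne_zero h0
    exact hw (congrFun h w)

theorem Polynomial.eval_derivative_ne_zero_of_forall_im_pos {q : Polynomial ℂ}
    (hq : 0 < q.degree) (hroots : ∀ t : ℂ, 0 < t.im → q.eval t ≠ 0) {w : ℂ} (hw : 0 < w.im) :
    q.derivative.eval w ≠ 0 := by
  intro h
  have hq' : q.derivative ≠ 0 := fun h' =>
    (natDegree_pos_iff_degree_pos.2 hq).ne' (derivative_eq_zero.1 h')
  have hroot : w ∈ q.derivative.rootSet ℂ := by simp [mem_rootSet, hq', h]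
  have hhull : convexHull ℝ (q.rootSet ℂ) ⊆ {t : ℂ | t.im ≤ 0} :=
    convexHull_min (fun t ht => not_lt.1 fun ht' => hroots t ht' (by
      simpa using (mem_rootSet.1 ht).2)) (convex_halfSpace_im_le 0)
  exact (hhull (rootSet_derivative_subset_convexHull_rootSet hq hroot)).not_gt hw

namespace MvPolynomial

variable {R σ : Type*} [CommSemiring R] [DecidableEq σ]

noncomputable def toPolynomialIn (e : σ) : MvPolynomial σ R →ₐ[R] Polynomial (MvPolynomial σ R) :=
  aeval fun i => if i = e then Polynomial.X else Polynomial.C (X i)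

theorem eval₂_toPolynomialIn (e : σ) (p : MvPolynomial σ R) (z : σ → R) (t : R) :
    (toPolynomialIn e p).eval₂ (eval z) t = eval (Function.update z e t) p := by
  induction p using MvPolynomial.induction_on with
  | C a => simp [toPolynomialIn]
  | add p q hp hq => simp only [map_add, Polynomial.eval₂_add, hp, hq]
  | mul_X p i hp =>
    simp only [map_mul, Polynomial.eval₂_mul, hp]
    by_cases h : i = e <;> simp [toPolynomialIn, h]

theorem derivative_toPolynomialIn (e : σ) (p : MvPolynomial σ R) :
    (toPolynomialIn e p).derivative = toPolynomialIn e (pderiv e p) := by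
  induction p using MvPolynomial.induction_on with
  | C a => simp [toPolynomialIn]
  | add p q hp hq => simp only [map_add, hp, hq]
  | mul_X p i hp =>
    rw [map_mul, Polynomial.derivative_mul, hp, pderiv_mul, map_add, map_mul, map_mul, pderiv_X]
    by_cases h : i = e <;> simp [toPolynomialIn, h, mul_comm]

end MvPolynomial

def upperHalfSpace (σ : Type*) : Set (σ → ℂ) := {z | ∀ i, 0 < (z i).im}

theorem isOpen_upperHalfSpace (σ : Type*) [Finite σ] : IsOpen (upperHalfSpace σ) := by
  simp only [upperHalfSpace, ofPred_forall]
  exact isOpen_iInter_of_finite fun i =>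
    isOpen_lt continuous_const (Complex.continuous_im.comp (continuous_apply i))

theorem update_mem_upperHalfSpace {σ : Type*} [DecidableEq σ] {z : σ → ℂ}
    (hz : z ∈ upperHalfSpace σ) (e : σ) {t : ℂ} (ht : 0 < t.im) :
    Function.update z e t ∈ upperHalfSpace σ := fun i => by
  rcases eq_or_ne i e with rfl | h
  · simpa using ht
  · simpa [h] using hz i

section UpperHalfSpace

variable {σ : Type*} [Fintype σ] [DecidableEq σ] {P : MvPolynomial σ ℂ}
  (hP : ∀ z ∈ upperHalfSpace σ, eval z P ≠ 0) (e : σ)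
include hP

theorem eval_leadingCoeff_toPolynomialIn_ne_zero {z : σ → ℂ} (hz : z ∈ upperHalfSpace σ) :
    eval z (toPolynomialIn e P).leadingCoeff ≠ 0 := by
  have hR : toPolynomialIn e P ≠ 0 := fun h => hP z hz (by
    rw [← Function.update_eq_self e z, ← eval₂_toPolynomialIn, h, Polynomial.eval₂_zero])
  -- `eval₂ (eval w) s R.reverse = s ^ deg R * P(…, w_e := 1/s)`, and `1/s` is in the upper
  -- half-plane when `s` is in the lower one.
  rw [← Polynomial.coeff_zero_reverse]
  refine eval_coeff_zero_ne_zero_of_frequently (isOpen_upperHalfSpace σ)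
    (by rwa [Polynomial.coeff_zero_reverse, Ne, Polynomial.leadingCoeff_eq_zero]) ?_ hz
  refine ((mem_closure_iff_frequently (s := {s : ℂ | s.im < 0})).1
    (by simp [Complex.closure_setOfPred_im_lt])).mono fun s (hs : s.im < 0) w hw => ?_
  have hs0 : s ≠ 0 := by
    rintro rfl
    simp at hs
  have : Invertible s⁻¹ := invertibleOfNonzero (inv_ne_zero hs0)
  have hrev := Polynomial.eval₂_reverse_eq_zero_iff (eval w) s⁻¹ (toPolynomialIn e P)
  rw [invOf_eq_inv, inv_inv] at hrev
  rw [Ne, hrev, eval₂_toPolynomialIn]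
  refine hP _ (update_mem_upperHalfSpace hw e ?_)
  rw [Complex.inv_im]
  exact div_pos (neg_pos.2 hs) (Complex.normSq_pos.2 hs0)

theorem eval_update_zero_ne_zero (h : ∃ w, eval (Function.update w e 0) P ≠ 0) {z : σ → ℂ}
    (hz : z ∈ upperHalfSpace σ) : eval (Function.update z e 0) P ≠ 0 := by
  have hcoeff (w : σ → ℂ) :
      eval w ((toPolynomialIn e P).coeff 0) = eval (Function.update w e 0) P := by
    rw [← eval₂_toPolynomialIn, Polynomial.eval₂_at_zero]
  obtain ⟨w, hw⟩ := h
  rw [← hcoeff]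
  refine eval_coeff_zero_ne_zero_of_frequently (isOpen_upperHalfSpace σ)
    (fun h0 => hw (by rw [← hcoeff, h0, map_zero])) ?_ hz
  refine ((mem_closure_iff_frequently (s := {s : ℂ | 0 < s.im})).1
    (by simp [Complex.closure_setOfPred_lt_im])).mono fun s (hs : 0 < s.im) w hw => ?_
  rw [eval₂_toPolynomialIn]
  exact hP _ (update_mem_upperHalfSpace hw e hs)

theorem eval_pderiv_ne_zero (h : pderiv e P ≠ 0) {z : σ → ℂ} (hz : z ∈ upperHalfSpace σ) :
    eval z (pderiv e P) ≠ 0 := by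
  set R := toPolynomialIn e P
  have hR : R.derivative ≠ 0 := by
    obtain ⟨w, hw⟩ := exists_eval_ne_zero h
    intro h0
    apply hw
    rw [← Function.update_eq_self e w, ← eval₂_toPolynomialIn, ← derivative_toPolynomialIn, h0,
      Polynomial.eval₂_zero]
  have hq : 0 < (R.map (eval z)).degree := by
    have hlead : (R.map (eval z)).coeff R.natDegree ≠ 0 := by
      rw [Polynomial.coeff_map]
      exact eval_leadingCoeff_toPolynomialIn_ne_zero hP e hz
    exact (WithBot.coe_pos.2 (Nat.pos_of_ne_zero (mt Polynomial.derivative_eq_zero.2 hR)))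
      |>.trans_le (Polynomial.le_degree_of_ne_zero hlead)
  have := Polynomial.eval_derivative_ne_zero_of_forall_im_pos hq (fun t ht => by
    rw [Polynomial.eval_map, eval₂_toPolynomialIn]
    exact hP _ (update_mem_upperHalfSpace hz e ht)) (hz e)
  rwa [Polynomial.derivative_map, Polynomial.eval_map, derivative_toPolynomialIn,
    eval₂_toPolynomialIn, Function.update_eq_self] at this

end UpperHalfSpace

theorem eval_map_del {m : ℕ} (e : Fin m) (Z : MvPolynomial (Fin m) ℝ) (z : Fin m → ℂ) :
    eval z (map (algebraMap ℝ ℂ) (del e Z)) =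
      eval (Function.update z e 0) (map (algebraMap ℝ ℂ) Z) := by
  induction Z using MvPolynomial.induction_on with
  | C a => simp [del]
  | add p q hp hq => simp only [del, map_add] at *; rw [hp, hq]
  | mul_X p i hp =>
    simp only [del, map_mul] at *
    rw [hp]
    by_cases h : i = e <;> simp [h]

theorem Stable.pderiv_eq_zero_or {m : ℕ} {Z : MvPolynomial (Fin m) ℝ} (hZ : Stable Z)
    (e : Fin m) :
    pderiv e Z = 0 ∨ Stable (pderiv e Z) := by
  refine or_iff_not_imp_left.2 fun h y hy => ?_
  rw [← pderiv_map]
  refine eval_pderiv_ne_zero hZ e (fun h0 => h ?_) hy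
  exact map_injective _ (algebraMap ℝ ℂ).injective (by rw [← pderiv_map, h0, map_zero])

theorem Stable.del_eq_zero_or {m : ℕ} {Z : MvPolynomial (Fin m) ℝ} (hZ : Stable Z) (e : Fin m) :
    del e Z = 0 ∨ Stable (del e Z) := by
  refine or_iff_not_imp_left.2 fun h y hy => ?_
  obtain ⟨w, hw⟩ := exists_eval_ne_zero (p := map (algebraMap ℝ ℂ) (del e Z)) fun h0 =>
    h (map_injective _ (algebraMap ℝ ℂ).injective (by rw [h0, map_zero]))
  rw [eval_map_del] at hw ⊢
  exact eval_update_zero_ne_zero hZ e ⟨w, hw⟩ hy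

theorem stable_minors {m : ℕ} (Z : MvPolynomial (Fin m) ℝ)
    (hZ : Stable Z) (e : Fin m) :
    (pderiv e Z = 0 ∨ Stable (pderiv e Z)) ∧ (del e Z = 0 ∨ Stable (del e Z)) :=
  ⟨hZ.pderiv_eq_zero_or e, hZ.del_eq_zero_or e⟩
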